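/- arXiv:1905.02926 — 3 statements merged into one kernel-verified Lean document; each statement's English description precedes it below -/
import Mathlib

section
/- Let O be a discrete valuation ring and let R be a commutative O-algebra which is reduced and which is finite and flat as an O-module. Let I be an ideal of R such that the quotient ring R/I is flat as an O-module. Then R/I is reduced. -/
/-!
Over the fraction field `K` of `O`, the algebra `K ⊗[O] R` is a localization of the reduced ring
`R`, hence reduced, and it is finite over `K`, hence artinian; so it is semisimple. Its quotient
`K ⊗[O] (R ⧸ I)` is then semisimple as well, hence reduced, and `R ⧸ I` embeds into it because
`R ⧸ I` is flat over `O`.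
-/

open TensorProduct

attribute [local instance] Algebra.TensorProduct.rightAlgebra in
theorem IsLocalization.isReduced_tensorProduct {O : Type*} [CommRing O] (M : Submonoid O)
    (A : Type*) [CommRing A] [Algebra O A] [IsLocalization M A]
    (R : Type*) [CommRing R] [Algebra O R] [IsReduced R] :
    IsReduced (A ⊗[O] R) :=
  let e := IsLocalization.algEquiv (Algebra.algebraMapSubmonoid R M)
    (Localization (Algebra.algebraMapSubmonoid R M)) (A ⊗[O] R)
  isReduced_of_injective e.symm.toRingHom e.symm.injective

theorem isSemisimpleRing_tensorProduct_of_isReduced (O : Type*) [CommRing O] (K : Type*) [Field K]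
    [Algebra O K] (A : Type*) [CommRing A] [Algebra O A] [Module.Finite O A]
    [IsReduced (K ⊗[O] A)] : IsSemisimpleRing (K ⊗[O] A) :=
  have : IsArtinianRing (K ⊗[O] A) := IsArtinianRing.of_finite K (K ⊗[O] A)
  IsArtinianRing.isSemisimpleRing_of_isReduced (K ⊗[O] A)

theorem isSemisimpleRing_tensorProduct_of_surjective {O : Type*} [CommRing O]
    (K : Type*) [CommRing K] [Algebra O K] {A B : Type*} [CommRing A] [Algebra O A] [CommRing B]
    [Algebra O B] [IsSemisimpleRing (K ⊗[O] A)] (f : A →ₐ[O] B) (hf : Function.Surjective f) :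
    IsSemisimpleRing (K ⊗[O] B) :=
  (Algebra.TensorProduct.map (AlgHom.id O K) f).toRingHom.isSemisimpleRing_of_surjective
    (TensorProduct.map_surjective Function.surjective_id hf)

theorem stmt_1_general {O : Type*} [CommRing O] [IsDomain O]
    {R : Type*} [CommRing R] [Algebra O R] [IsReduced R]
    [Module.Finite O R]
    (I : Ideal R) (hflat : Module.Flat O (R ⧸ I)) :
    IsReduced (R ⧸ I) := by
  let K := FractionRing O
  have : IsReduced (K ⊗[O] R) := IsLocalization.isReduced_tensorProduct (nonZeroDivisors O) K R
  have : IsSemisimpleRing (K ⊗[O] R) := isSemisimpleRing_tensorProduct_of_isReduced O K R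
  have : IsSemisimpleRing (K ⊗[O] (R ⧸ I)) :=
    isSemisimpleRing_tensorProduct_of_surjective K (Ideal.Quotient.mkₐ O I)
      Ideal.Quotient.mk_surjective
  exact isReduced_of_injective (Algebra.TensorProduct.includeRight : R ⧸ I →ₐ[O] K ⊗[O] (R ⧸ I))
    (Algebra.TensorProduct.includeRight_injective (IsFractionRing.injective O K))

/-- **Lemma 2.11 (Lundell's Lemma 2.4).**
Let `O` be a discrete valuation ring and `R` a commutative `O`-algebra which is reduced
and finite flat as an `O`-module.  If `I` is an ideal of `R` such that `R/I` is flat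
over `O`, then `R/I` is reduced. -/
theorem stmt_1 {O : Type*} [CommRing O] [IsDomain O] [IsDiscreteValuationRing O]
    {R : Type*} [CommRing R] [Algebra O R] [IsReduced R]
    [Module.Finite O R] [Module.Flat O R]
    (I : Ideal R) (hflat : Module.Flat O (R ⧸ I)) :
    IsReduced (R ⧸ I) :=
  stmt_1_general I hflat
end

section
/- Let O be an integral domain and T a commutative O-algebra. Regard Hom_O(T, O) as a T-module via (t·φ)(x) := φ(t·x). Assume there exists an isomorphism of T-modules T ≅ Hom_O(T, O) (the Gorenstein condition). Then for every ideal 𝔞 of T, the quotient O-module T / T[𝔞], where T[𝔞] := {t ∈ T : a·t = 0 for all a ∈ 𝔞}, is torsion-free as an O-module (i.e., if λ ∈ O is nonzero and λ·m = 0 in T/T[𝔞], then m = 0). -/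
/-- **Algebraic core of Lemma 4.2 of the paper.**
Let `O` be an integral domain and `T` a commutative `O`-algebra satisfying the Gorenstein
condition: there is a `T`-module isomorphism `T ≅ Hom_O(T, O)`, where `Hom_O(T, O)` is a
`T`-module via `(t·φ)(x) = φ(t·x)`.  (Equivalently, there exists an `O`-linear functional
`e : T → O` such that `t ↦ (x ↦ e (t·x))` is a bijection `T → Hom_O(T, O)`.)
Then for every ideal `𝔞` of `T`, the quotient `T / T[𝔞]`, where
`T[𝔞] = {t ∈ T : a·t = 0 for all a ∈ 𝔞}`, is torsion-free as an `O`-module. -/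
theorem stmt_4 {O T : Type*} [CommRing O] [IsDomain O] [CommRing T] [Algebra O T]
    (hGor : ∃ e : T →ₗ[O] O,
      Function.Bijective fun t : T => e.comp (LinearMap.mulLeft O t))
    (𝔞 : Ideal T) (c : O) (hc : c ≠ 0)
    (m : T ⧸ Submodule.torsionBySet T T (𝔞 : Set T)) (hm : c • m = 0) :
    m = 0 := by
  obtain ⟨e, hinj, -⟩ := hGor
  -- T is O-torsion-free
  have htf : ∀ s : T, c • s = 0 → s = 0 := by
    intro s hs
    have h0 : (fun t : T => e.comp (LinearMap.mulLeft O t)) s =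
        (fun t : T => e.comp (LinearMap.mulLeft O t)) 0 := by
      ext x
      show e (s * x) = e (0 * x)
      have hcx : c • (s * x) = (c • s) * x := (smul_mul_assoc c s x).symm
      have hz : c * e (s * x) = 0 := by
        have : c • e (s * x) = 0 := by
          rw [← map_smul, hcx, hs, zero_mul, map_zero]
        simpa [smul_eq_mul] using this
      rw [zero_mul, map_zero]
      exact (mul_eq_zero.mp hz).resolve_left hc
    exact hinj h0
  obtain ⟨t, rfl⟩ := Submodule.Quotient.mk_surjective _ m
  rw [← Submodule.Quotient.mk_smul] at hm
  have hct : c • t ∈ Submodule.torsionBySet T T (𝔞 : Set T) :=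
    (Submodule.Quotient.mk_eq_zero _).mp hm
  rw [Submodule.Quotient.mk_eq_zero]
  rw [Submodule.mem_torsionBySet_iff] at hct ⊢
  intro a
  have := hct a
  have h : c • (a.1 • t) = 0 := by
    rw [smul_comm]; exact this
  exact htf _ h
end

section
/- Let O be a discrete valuation ring with uniformizer λ and fraction field K, let t be a natural number, and let u be a unit of O with u ≠ 1 such that u − 1 ∈ (λ^s) but u − 1 ∉ (λ^{s+1}) for a natural number s. Consider the O-module M := (K/O) × (O/(λ^t)) × (O/(λ^t)) and the O-linear endomorphism φ of M given by φ(x, y, z) = (u·x, y, u⁻¹·z). Then: (i) the kernel of φ − 1 is isomorphic as an O-module to O/(λ^s) × O/(λ^t) × O/(λ^{min(s,t)}); and (ii) the cokernel M/(φ − 1)M is isomorphic as an O-module to O/(λ^t) × O/(λ^{min(s,t)}). -/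
/-!
Write `u - 1 = w ϖ^s` with `w` a unit; since `u⁻¹ - 1 = -u⁻¹ (u - 1)`, the map `φ - 1` is
diagonal with entries associate to `ϖ^s`, `0`, `ϖ^s`, so its kernel and cokernel split
componentwise. On `K/O` multiplication by `ϖ^s` is surjective with kernel `ϖ^{-s}O/O ≅ O/ϖ^s`.
On `O/ϖ^t` its kernel is `ϖ^{t - min(s,t)}O/ϖ^t ≅ O/ϖ^{min(s,t)}` and its cokernel is
`O/(ϖ^t, ϖ^s) = O/ϖ^{min(s,t)}`.
-/

open LinearMap Submodule

namespace Submodule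

variable {R M N : Type*}

def prodEquiv [Semiring R] [AddCommMonoid M] [AddCommMonoid N] [Module R M] [Module R N]
    (p : Submodule R M) (q : Submodule R N) : p.prod q ≃ₗ[R] p × q where
  toFun x := (⟨x.1.1, x.2.1⟩, ⟨x.1.2, x.2.2⟩)
  invFun x := ⟨(x.1, x.2), ⟨x.1.2, x.2.2⟩⟩
  left_inv _ := rfl
  right_inv _ := rfl
  map_add' _ _ := rfl
  map_smul' _ _ := rfl

noncomputable def quotientProdEquiv [Ring R] [AddCommGroup M] [AddCommGroup N] [Module R M]
    [Module R N] (p : Submodule R M) (q : Submodule R N) :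
    ((M × N) ⧸ p.prod q) ≃ₗ[R] (M ⧸ p) × (N ⧸ q) :=
  (quotEquivOfEq _ _ (by rw [ker_prodMap, ker_mkQ, ker_mkQ])).trans
    (quotKerEquivOfSurjective (p.mkQ.prodMap q.mkQ)
      ((mkQ_surjective p).prodMap (mkQ_surjective q)))

end Submodule

namespace LinearMap

variable {R M N : Type*}

noncomputable def quotEquivOfKerEqOfRangeEq [Ring R] [AddCommGroup M] [AddCommGroup N] [Module R M]
    [Module R N] (f : M →ₗ[R] N) {p : Submodule R M} {q : Submodule R N} (hker : ker f = p)
    (hrange : range f = q) : q ≃ₗ[R] M ⧸ p :=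
  ((quotEquivOfEq _ _ hker).symm ≪≫ₗ f.quotKerEquivRange ≪≫ₗ LinearEquiv.ofEq _ _ hrange).symm

variable [CommSemiring R] [AddCommMonoid M] [Module R M]

theorem ker_smul_id_of_associated {a b : R} (h : Associated a b) :
    ker (b • LinearMap.id : M →ₗ[R] M) = ker (a • LinearMap.id) := by
  obtain ⟨w, rfl⟩ := h
  ext x
  simp only [mem_ker, smul_apply, id_coe, id_eq, mul_comm a, mul_smul, ← Units.smul_def,
    smul_eq_zero_iff_eq]

theorem range_smul_id_of_associated {a b : R} (h : Associated a b) :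
    range (b • LinearMap.id : M →ₗ[R] M) = range (a • LinearMap.id) := by
  obtain ⟨w, rfl⟩ := h
  ext x
  simp only [mem_range, smul_apply, id_coe, id_eq, mul_comm a, mul_smul, ← Units.smul_def]
  constructor
  · rintro ⟨y, rfl⟩
    exact ⟨w • y, smul_comm _ _ _⟩
  · rintro ⟨y, rfl⟩
    exact ⟨w⁻¹ • y, by rw [smul_comm, smul_inv_smul]⟩

end LinearMap

theorem Units.associated_sub_one_inv_sub_one {R : Type*} [CommRing R] (u : Rˣ) :
    Associated ((u : R) - 1) (((u⁻¹ : Rˣ) : R) - 1) :=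
  ⟨-u⁻¹, by rw [Units.val_neg, mul_neg, sub_mul, one_mul, u.mul_inv, neg_sub]⟩

theorem IsDiscreteValuationRing.associated_pow_of_mem_span_pow_of_notMem {R : Type*} [CommRing R]
    [IsDomain R] [IsDiscreteValuationRing R] {ϖ x : R} (hϖ : Irreducible ϖ) {s : ℕ}
    (hs : x ∈ Ideal.span {ϖ ^ s}) (hs' : x ∉ Ideal.span {ϖ ^ (s + 1)}) : Associated (ϖ ^ s) x := by
  obtain ⟨d, rfl⟩ := Ideal.mem_span_singleton'.mp hs
  have hd : IsUnit d := by
    by_contra hd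
    have hdm := (IsLocalRing.mem_maximalIdeal d).mpr hd
    rw [(irreducible_iff_uniformizer ϖ).mp hϖ, Ideal.mem_span_singleton] at hdm
    obtain ⟨e, rfl⟩ := hdm
    exact hs' (Ideal.mem_span_singleton.mpr ⟨e, by ring⟩)
  exact ⟨hd.unit, mul_comm _ _⟩

section QuotientPow

variable {R : Type*} [CommRing R]

theorem range_smul_id_quotient (I : Ideal R) (a : R) :
    range (a • LinearMap.id : (R ⧸ I) →ₗ[R] R ⧸ I) = Submodule.map I.mkQ (Ideal.span {a}) := by
  ext y
  obtain ⟨x, rfl⟩ := I.mkQ_surjective y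
  simp only [mem_range, LinearMap.smul_apply, id_coe, id_eq, mem_map, mkQ_apply]
  constructor
  · rintro ⟨z, hz⟩
    obtain ⟨z, rfl⟩ := I.mkQ_surjective z
    exact ⟨a * z, Ideal.mem_span_singleton'.mpr ⟨z, mul_comm _ _⟩, hz⟩
  · rintro ⟨z, hz, hzx⟩
    obtain ⟨c, rfl⟩ := Ideal.mem_span_singleton'.mp hz
    exact ⟨Submodule.Quotient.mk c,
      by rw [← hzx, ← Submodule.Quotient.mk_smul, smul_eq_mul, mul_comm]⟩

noncomputable def quotRangeSmulIdQuotientEquiv (I : Ideal R) (a : R) :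
    ((R ⧸ I) ⧸ range (a • LinearMap.id : (R ⧸ I) →ₗ[R] R ⧸ I)) ≃ₗ[R] R ⧸ (I ⊔ Ideal.span {a}) :=
  quotEquivOfEq _ _ (range_smul_id_quotient I a) ≪≫ₗ quotientQuotientEquivQuotientSup I _

theorem span_pow_sup_span_pow (p : R) (s t : ℕ) :
    Ideal.span {p ^ t} ⊔ Ideal.span {p ^ s} = Ideal.span {p ^ min s t} := by
  rcases le_total s t with h | h
  · rw [min_eq_left h, sup_eq_right]
    exact Ideal.span_singleton_le_span_singleton.mpr (pow_dvd_pow p h)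
  · rw [min_eq_right h, sup_eq_left]
    exact Ideal.span_singleton_le_span_singleton.mpr (pow_dvd_pow p h)

variable [IsDomain R] {p : R}

theorem pow_sub_min_dvd_of_pow_dvd_pow_mul (hp : p ≠ 0) {s t : ℕ} {x : R}
    (h : p ^ t ∣ p ^ s * x) : p ^ (t - min s t) ∣ x := by
  rcases le_total s t with hst | hts
  · rw [min_eq_left hst, ← mul_dvd_mul_iff_left (pow_ne_zero s hp), ← pow_add,
      Nat.add_sub_cancel' hst]
    exact h
  · rw [min_eq_right hts, Nat.sub_self, pow_zero]
    exact one_dvd x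

noncomputable def kerSmulPowQuotientEquiv (hp : p ≠ 0) (s t : ℕ) :
    ker (p ^ s • LinearMap.id : (R ⧸ Ideal.span {p ^ t}) →ₗ[R] R ⧸ Ideal.span {p ^ t}) ≃ₗ[R]
      R ⧸ Ideal.span {p ^ min s t} := by
  have hpow : p ^ (t - min s t) * p ^ min s t = p ^ t := by
    rw [← pow_add, Nat.sub_add_cancel (min_le_right s t)]
  refine quotEquivOfKerEqOfRangeEq (p ^ (t - min s t) • (Ideal.span {p ^ t}).mkQ) ?_ ?_
  · ext x
    simp only [mem_ker, LinearMap.smul_apply, mkQ_apply, ← Submodule.Quotient.mk_smul,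
      Submodule.Quotient.mk_eq_zero, Ideal.mem_span_singleton, smul_eq_mul]
    rw [← hpow, mul_dvd_mul_iff_left (pow_ne_zero _ hp)]
  · refine le_antisymm ?_ fun y hy ↦ ?_
    · rintro _ ⟨z, rfl⟩
      simp only [mem_ker, LinearMap.smul_apply, id_coe, id_eq, mkQ_apply,
        ← Submodule.Quotient.mk_smul, Submodule.Quotient.mk_eq_zero, Ideal.mem_span_singleton,
        smul_eq_mul, ← mul_assoc, ← pow_add]
      exact (pow_dvd_pow p (by omega)).mul_right z
    · obtain ⟨x, rfl⟩ := (Ideal.span {p ^ t}).mkQ_surjective y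
      simp only [mem_ker, LinearMap.smul_apply, id_coe, id_eq, mkQ_apply,
        ← Submodule.Quotient.mk_smul, Submodule.Quotient.mk_eq_zero, Ideal.mem_span_singleton,
        smul_eq_mul] at hy
      obtain ⟨z, rfl⟩ := pow_sub_min_dvd_of_pow_dvd_pow_mul hp hy
      exact ⟨z, rfl⟩

end QuotientPow

section FractionModInteger

variable {R : Type*} (K : Type*) [CommRing R] [Field K] [Algebra R K]

noncomputable def divByModInteger (a : R) : R →ₗ[R] K ⧸ range (Algebra.linearMap R K) :=
  (range (Algebra.linearMap R K)).mkQ ∘ₗ ((algebraMap R K a)⁻¹ • Algebra.linearMap R K)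

variable {K}

theorem divByModInteger_apply (a x : R) :
    divByModInteger K a x = Submodule.Quotient.mk ((algebraMap R K a)⁻¹ * algebraMap R K x) :=
  rfl

variable [IsFractionRing R K] {a : R}

theorem ker_divByModInteger (ha : a ≠ 0) : ker (divByModInteger K a) = Ideal.span {a} := by
  have ha' : algebraMap R K a ≠ 0 := IsFractionRing.to_map_eq_zero_iff.not.mpr ha
  ext x
  rw [mem_ker, divByModInteger_apply, Submodule.Quotient.mk_eq_zero, Ideal.mem_span_singleton]
  constructor
  · rintro ⟨y, hy⟩
    rw [Algebra.linearMap_apply] at hy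
    refine ⟨y, IsFractionRing.injective R K ?_⟩
    rw [map_mul, hy, mul_inv_cancel_left₀ ha']
  · rintro ⟨y, rfl⟩
    exact ⟨y, by rw [Algebra.linearMap_apply, map_mul, inv_mul_cancel_left₀ ha']⟩

theorem range_divByModInteger (ha : a ≠ 0) :
    range (divByModInteger K a) =
      ker (a • LinearMap.id : (K ⧸ range (Algebra.linearMap R K)) →ₗ[R] _) := by
  have ha' : algebraMap R K a ≠ 0 := IsFractionRing.to_map_eq_zero_iff.not.mpr ha
  refine le_antisymm ?_ fun y hy ↦ ?_
  · rintro _ ⟨x, rfl⟩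
    rw [mem_ker, LinearMap.smul_apply, id_apply, divByModInteger_apply,
      ← Submodule.Quotient.mk_smul, Algebra.smul_def, mul_inv_cancel_left₀ ha',
      Submodule.Quotient.mk_eq_zero]
    exact ⟨x, rfl⟩
  · obtain ⟨k, rfl⟩ := Submodule.mkQ_surjective _ y
    rw [mem_ker, LinearMap.smul_apply, id_apply, mkQ_apply, ← Submodule.Quotient.mk_smul,
      Submodule.Quotient.mk_eq_zero] at hy
    obtain ⟨z, hz⟩ := hy
    rw [Algebra.linearMap_apply] at hz
    refine ⟨z, ?_⟩
    rw [divByModInteger_apply, hz, Algebra.smul_def,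
      inv_mul_cancel_left₀ ha', mkQ_apply]

theorem range_smul_id_modInteger_eq_top (ha : a ≠ 0) :
    range (a • LinearMap.id : (K ⧸ range (Algebra.linearMap R K)) →ₗ[R] _) = ⊤ := by
  have ha' : algebraMap R K a ≠ 0 := IsFractionRing.to_map_eq_zero_iff.not.mpr ha
  refine range_eq_top.mpr fun y ↦ ?_
  obtain ⟨k, rfl⟩ := Submodule.mkQ_surjective _ y
  refine ⟨Submodule.Quotient.mk ((algebraMap R K a)⁻¹ * k), ?_⟩
  rw [LinearMap.smul_apply, id_apply, ← Submodule.Quotient.mk_smul, Algebra.smul_def,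
    mul_inv_cancel_left₀ ha', mkQ_apply]

noncomputable def kerSmulModIntegerEquiv (ha : a ≠ 0) :
    ker (a • LinearMap.id : (K ⧸ range (Algebra.linearMap R K)) →ₗ[R] _) ≃ₗ[R] R ⧸ Ideal.span {a} :=
  quotEquivOfKerEqOfRangeEq _ (ker_divByModInteger ha) (range_divByModInteger ha)

end FractionModInteger

theorem prodMap_sub_id {R M N : Type*} [Ring R] [AddCommGroup M] [AddCommGroup N] [Module R M]
    [Module R N] (f : M →ₗ[R] M) (g : N →ₗ[R] N) :
    f.prodMap g - LinearMap.id = (f - LinearMap.id).prodMap (g - LinearMap.id) := by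
  ext <;> simp

theorem smul_id_sub_id {R M : Type*} [CommRing R] [AddCommGroup M] [Module R M] (a : R) :
    a • LinearMap.id - LinearMap.id = (a - 1) • (LinearMap.id : M →ₗ[R] M) := by
  rw [sub_smul, one_smul]

theorem stmt_7_general {O : Type*} [CommRing O] [IsDomain O] [IsDiscreteValuationRing O]
    (K : Type*) [Field K] [Algebra O K] [IsFractionRing O K]
    (ϖ : O) (hϖ : Irreducible ϖ) (t s : ℕ) (u : Oˣ)
    (hus : (u : O) - 1 ∈ Ideal.span {ϖ ^ s})
    (hus' : (u : O) - 1 ∉ Ideal.span {ϖ ^ (s + 1)}) :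
    ∀ φ : ((K ⧸ LinearMap.range (Algebra.linearMap O K)) ×
          (O ⧸ Ideal.span {ϖ ^ t}) × (O ⧸ Ideal.span {ϖ ^ t})) →ₗ[O]
        ((K ⧸ LinearMap.range (Algebra.linearMap O K)) ×
          (O ⧸ Ideal.span {ϖ ^ t}) × (O ⧸ Ideal.span {ϖ ^ t})),
      φ = LinearMap.prodMap ((u : O) • LinearMap.id)
            (LinearMap.prodMap LinearMap.id (((u⁻¹ : Oˣ) : O) • LinearMap.id)) →
      Nonempty (↥(LinearMap.ker (φ - LinearMap.id)) ≃ₗ[O]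
          (O ⧸ Ideal.span {ϖ ^ s}) × (O ⧸ Ideal.span {ϖ ^ t}) ×
            (O ⧸ Ideal.span {ϖ ^ (min s t)})) ∧
      Nonempty ((((K ⧸ LinearMap.range (Algebra.linearMap O K)) ×
            (O ⧸ Ideal.span {ϖ ^ t}) × (O ⧸ Ideal.span {ϖ ^ t})) ⧸
            LinearMap.range (φ - LinearMap.id)) ≃ₗ[O]
          (O ⧸ Ideal.span {ϖ ^ t}) × (O ⧸ Ideal.span {ϖ ^ (min s t)})) := by
  rintro _ rfl
  have h₁ : Associated (ϖ ^ s) ((u : O) - 1) :=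
    IsDiscreteValuationRing.associated_pow_of_mem_span_pow_of_notMem hϖ hus hus'
  have h₂ : Associated (ϖ ^ s) (((u⁻¹ : Oˣ) : O) - 1) :=
    h₁.trans u.associated_sub_one_inv_sub_one
  have hϖs : ϖ ^ s ≠ 0 := pow_ne_zero s hϖ.ne_zero
  rw [prodMap_sub_id, prodMap_sub_id, sub_self, smul_id_sub_id, smul_id_sub_id]
  constructor
  · rw [ker_prodMap, ker_prodMap, ker_zero, ker_smul_id_of_associated h₁,
      ker_smul_id_of_associated h₂]
    exact ⟨Submodule.prodEquiv _ _ ≪≫ₗ (kerSmulModIntegerEquiv hϖs).prodCongr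
      (Submodule.prodEquiv _ _ ≪≫ₗ
        Submodule.topEquiv.prodCongr (kerSmulPowQuotientEquiv hϖ.ne_zero s t))⟩
  · rw [range_prodMap, range_prodMap, range_zero, range_smul_id_of_associated h₁,
      range_smul_id_of_associated h₂, range_smul_id_modInteger_eq_top hϖs]
    exact ⟨Submodule.quotientProdEquiv _ _ ≪≫ₗ LinearEquiv.uniqueProd ≪≫ₗ
      Submodule.quotientProdEquiv _ _ ≪≫ₗ (quotEquivOfEqBot ⊥ rfl).prodCongr
        (quotRangeSmulIdQuotientEquiv _ _ ≪≫ₗ quotEquivOfEq _ _ (span_pow_sup_span_pow ϖ s t))⟩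

/-- **Frobenius invariants/coinvariants computation (Section 3.2 of the paper).**
Let `O` be a DVR with uniformizer `ϖ` and fraction field `K`, `t ∈ ℕ`, and `u ∈ O^×` a
unit with `u ≠ 1` and `u − 1 ∈ (ϖ^s) \ (ϖ^{s+1})`.  For the `O`-module
`M := K/O × O/(ϖ^t) × O/(ϖ^t)` and the endomorphism `φ(x, y, z) = (u·x, y, u⁻¹·z)`:
(i) `ker(φ − 1) ≅ O/(ϖ^s) × O/(ϖ^t) × O/(ϖ^{min(s,t)})`; and
(ii) `M/(φ − 1)M ≅ O/(ϖ^t) × O/(ϖ^{min(s,t)})`. -/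
theorem stmt_7 {O : Type*} [CommRing O] [IsDomain O] [IsDiscreteValuationRing O]
    (K : Type*) [Field K] [Algebra O K] [IsFractionRing O K]
    (ϖ : O) (hϖ : Irreducible ϖ) (t s : ℕ) (u : Oˣ) (hu1 : u ≠ 1)
    (hus : (u : O) - 1 ∈ Ideal.span {ϖ ^ s})
    (hus' : (u : O) - 1 ∉ Ideal.span {ϖ ^ (s + 1)}) :
    ∀ φ : ((K ⧸ LinearMap.range (Algebra.linearMap O K)) ×
          (O ⧸ Ideal.span {ϖ ^ t}) × (O ⧸ Ideal.span {ϖ ^ t})) →ₗ[O]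
        ((K ⧸ LinearMap.range (Algebra.linearMap O K)) ×
          (O ⧸ Ideal.span {ϖ ^ t}) × (O ⧸ Ideal.span {ϖ ^ t})),
      φ = LinearMap.prodMap ((u : O) • LinearMap.id)
            (LinearMap.prodMap LinearMap.id (((u⁻¹ : Oˣ) : O) • LinearMap.id)) →
      Nonempty (↥(LinearMap.ker (φ - LinearMap.id)) ≃ₗ[O]
          (O ⧸ Ideal.span {ϖ ^ s}) × (O ⧸ Ideal.span {ϖ ^ t}) ×
            (O ⧸ Ideal.span {ϖ ^ (min s t)})) ∧
      Nonempty ((((K ⧸ LinearMap.range (Algebra.linearMap O K)) ×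
            (O ⧸ Ideal.span {ϖ ^ t}) × (O ⧸ Ideal.span {ϖ ^ t})) ⧸
            LinearMap.range (φ - LinearMap.id)) ≃ₗ[O]
          (O ⧸ Ideal.span {ϖ ^ t}) × (O ⧸ Ideal.span {ϖ ^ (min s t)})) :=
  stmt_7_general K ϖ hϖ t s u hus hus'
end
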